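/- Let X be a Banach space with the Daugavet property, and construct (X, |·|_ε) as follows: x_0 ∈ S_X, f ∈ S_{X*} with f(x_0) = 1, δ > 0, B_δ := closed convex hull of B_X ∪ {±(1+δ)x_0}, C_ε := B_X + εB_δ, |·|_ε the Minkowski functional of C_ε. Then for every x with |x|_ε = 1, every η > 0, and every convex combination of slices C of the unit ball C_ε of (X, |·|_ε), there exists y ∈ C with |x - y|_ε ≥ (2 - 3ε(1+δ) - η)/(1 + ε(1+δ)). -/

import Mathlib

open NormedSpace Metric
open scoped Pointwise BigOperators

/-- `B_δ`: the closed convex hull of `B_X ∪ {(1+δ)x₀} ∪ {-(1+δ)x₀}`. -/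
noncomputable def Bdelta {X : Type*} [NormedAddCommGroup X] [NormedSpace ℝ X]
    (x₀ : X) (δ : ℝ) : Set X :=
  closure (convexHull ℝ (Metric.closedBall (0 : X) 1 ∪ {(1 + δ) • x₀, -((1 + δ) • x₀)}))

/-- `C_ε := B_X + ε B_δ`. -/
noncomputable def Ceps {X : Type*} [NormedAddCommGroup X] [NormedSpace ℝ X]
    (x₀ : X) (δ ε : ℝ) : Set X :=
  Metric.closedBall (0 : X) 1 + ε • Bdelta x₀ δ

/-- The convex combination of slices `Σ λᵢ S(B, gᵢ, αᵢ)` of a set `B`. -/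
def convexCombOfSlices {X : Type*} [NormedAddCommGroup X] [NormedSpace ℝ X]
    (B : Set X) {n : ℕ} (lam : Fin n → ℝ) (g : Fin n → StrongDual ℝ X)
    (α : Fin n → ℝ) : Set X :=
  {y : X | ∃ z : Fin n → X, (∀ i, z i ∈ B ∧ g i (z i) > 1 - α i) ∧
    y = ∑ i, lam i • z i}

/-!
`C_ε` is `B_X + K` with `K = ε B_δ` convex and of radius `ρ = ε(1+δ)`. Given slices of `C_ε`,
the functionals `gᵢ` have norm at most `1` (as `B_X ⊆ C_ε`), and we pick `bᵢ + kᵢ ∈ C_ε` deep in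
the `i`-th slice. The Daugavet property applied to `x / ‖x‖` and the slices of `B_X` defined by
`gᵢ / ‖gᵢ‖` yields `wᵢ ∈ B_X` with `‖x / ‖x‖ - ∑ λᵢ wᵢ‖ > 2 - η`; translating, `wᵢ + kᵢ` lies in
the `i`-th slice of `C_ε`. Both `x - x / ‖x‖` and `∑ λᵢ kᵢ ∈ K` have norm at most `ρ`, so
`y = ∑ λᵢ (wᵢ + kᵢ)` satisfies `‖x - y‖ > 2 - 2ρ - η`, and `|·|_ε ≥ ‖·‖ / (1 + ρ)`.
-/

def HasDaugavetProperty (X : Type*) [NormedAddCommGroup X] [NormedSpace ℝ X] : Prop :=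
  ∀ x : X, ‖x‖ = 1 → ∀ (n : ℕ) (lam : Fin n → ℝ), (∀ i, 0 ≤ lam i) →
    (∑ i, lam i) = 1 → ∀ g : Fin n → StrongDual ℝ X, (∀ i, ‖g i‖ = 1) →
    ∀ α : Fin n → ℝ, (∀ i, 0 < α i) → ∀ η : ℝ, 0 < η →
    ∃ y ∈ convexCombOfSlices (closedBall (0 : X) 1) lam g α, ‖x - y‖ > 2 - η

lemma closedBall_zero_add_subset {X : Type*} [SeminormedAddCommGroup X] {K : Set X} {r ρ : ℝ}
    (hKρ : K ⊆ closedBall 0 ρ) : closedBall (0 : X) r + K ⊆ closedBall 0 (r + ρ) := by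
  rintro _ ⟨b, hb, k, hk, rfl⟩
  exact mem_closedBall_zero_iff.2 (norm_add_le_of_le (mem_closedBall_zero_iff.1 hb)
    (mem_closedBall_zero_iff.1 (hKρ hk)))

section Lemmas

variable {X : Type*} [NormedAddCommGroup X] [NormedSpace ℝ X]

section Functionals

variable {C : Set X} {g : StrongDual ℝ X}

lemma norm_le_one_of_sSup_image_eq_one (hC : closedBall 0 1 ⊆ C) (hg : sSup (g '' C) = 1) :
    ‖g‖ ≤ 1 := by
  have hbdd : BddAbove (g '' C) := by
    by_contra h
    rw [csSup_of_not_bddAbove h, Real.sSup_empty] at hg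
    exact zero_ne_one hg
  have hle : ∀ u : X, ‖u‖ ≤ 1 → g u ≤ 1 := fun u hu =>
    hg ▸ le_csSup hbdd (Set.mem_image_of_mem g (hC (mem_closedBall_zero_iff.2 hu)))
  refine ContinuousLinearMap.opNorm_le_of_unit_norm zero_le_one fun u hu => ?_
  have hneg := hle (-u) (by rw [norm_neg, hu])
  rw [map_neg] at hneg
  exact abs_le.2 ⟨by linarith, hle u hu.le⟩

lemma ne_zero_of_sSup_image_eq_one (hC : C.Nonempty) (hg : sSup (g '' C) = 1) : g ≠ 0 := by
  rintro rfl
  simp [hC.image_const] at hg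

lemma lt_apply_add_of_lt (hg : ‖g‖ ≤ 1) {α : ℝ} (hα : 0 ≤ α) {b v w : X} (hb : ‖b‖ ≤ 1)
    (hbv : 1 - α / 2 < g (b + v)) (hw : ‖g‖ * (1 - α / 2) < g w) : 1 - α < g (w + v) := by
  have hgb : g b ≤ ‖g‖ :=
    (le_abs_self _).trans ((g.le_opNorm b).trans (mul_le_of_le_one_right (norm_nonneg g) hb))
  rw [map_add] at hbv ⊢
  nlinarith [mul_nonneg (sub_nonneg.2 hg) hα]

end Functionals

lemma norm_sub_inv_norm_smul_self {x : X} (hx : x ≠ 0) : ‖x - ‖x‖⁻¹ • x‖ = |‖x‖ - 1| := by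
  have hsmul : (‖x‖ - 1) • (‖x‖⁻¹ • x) = x - ‖x‖⁻¹ • x := by
    rw [sub_smul, one_smul, smul_smul, mul_inv_cancel₀ (norm_ne_zero_iff.2 hx), one_smul]
  have hunit : ‖‖x‖⁻¹ • x‖ = 1 := norm_smul_inv_norm (𝕜 := ℝ) hx
  rw [← hsmul, norm_smul, hunit, mul_one, Real.norm_eq_abs]

lemma norm_div_le_gauge {C : Set X} (hC : closedBall 0 1 ⊆ C) {r : ℝ} (hr : 0 ≤ r)
    (hCr : C ⊆ closedBall 0 r) (u : X) : ‖u‖ / r ≤ gauge C u := by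
  have habs : Absorbent ℝ C := ((absorbent_ball_zero one_pos).mono ball_subset_closedBall).mono hC
  simpa only [gauge_closedBall hr] using gauge_mono habs hCr u

lemma gauge_le_norm {C : Set X} (hC : closedBall 0 1 ⊆ C) (u : X) : gauge C u ≤ ‖u‖ := by
  simpa only [gauge_closedBall zero_le_one, div_one] using
    gauge_mono ((absorbent_ball_zero one_pos).mono ball_subset_closedBall) hC u

lemma HasDaugavetProperty.exists_norm_sub_sum_gt (hD : HasDaugavetProperty X) {x : X}
    (hx : ‖x‖ = 1) {n : ℕ} {lam : Fin n → ℝ} (hlam : ∀ i, 0 ≤ lam i) (hlam1 : ∑ i, lam i = 1)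
    {g : Fin n → StrongDual ℝ X} (hg : ∀ i, g i ≠ 0) {α : Fin n → ℝ} (hα : ∀ i, 0 < α i)
    {η : ℝ} (hη : 0 < η) :
    ∃ w : Fin n → X, (∀ i, ‖w i‖ ≤ 1 ∧ ‖g i‖ * (1 - α i) < g i (w i)) ∧
      2 - η < ‖x - ∑ i, lam i • w i‖ := by
  have hgpos i : 0 < ‖g i‖ := norm_pos_iff.2 (hg i)
  obtain ⟨_, ⟨w, hw, rfl⟩, hxw⟩ := hD x hx n lam hlam hlam1 (fun i => ‖g i‖⁻¹ • g i)
    (fun i => norm_smul_inv_norm (𝕜 := ℝ) (hg i)) α hα η hη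
  refine ⟨w, fun i => ⟨mem_closedBall_zero_iff.1 (hw i).1, ?_⟩, hxw⟩
  exact (lt_inv_mul_iff₀ (hgpos i)).1 (hw i).2

lemma HasDaugavetProperty.exists_mem_convexCombOfSlices_closedBall_add
    (hD : HasDaugavetProperty X) {K : Set X} (hK : Convex ℝ K) (hK0 : (0 : X) ∈ K) {ρ : ℝ}
    (hKρ : K ⊆ closedBall 0 ρ) {x : X} (hx1 : 1 ≤ ‖x‖) (hxρ : ‖x‖ ≤ 1 + ρ)
    {n : ℕ} {lam : Fin n → ℝ} (hlam : ∀ i, 0 ≤ lam i) (hlam1 : ∑ i, lam i = 1)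
    {g : Fin n → StrongDual ℝ X} (hg : ∀ i, sSup (g i '' (closedBall 0 1 + K)) = 1)
    {α : Fin n → ℝ} (hα : ∀ i, 0 < α i) {η : ℝ} (hη : 0 < η) :
    ∃ y ∈ convexCombOfSlices (closedBall 0 1 + K) lam g α, 2 - 2 * ρ - η < ‖x - y‖ := by
  have hball : closedBall (0 : X) 1 ⊆ closedBall 0 1 + K := Set.subset_add_left _ hK0
  have hne : (closedBall (0 : X) 1 + K).Nonempty := (nonempty_closedBall.2 zero_le_one).mono hball
  have hdeep i : ∃ b ∈ closedBall (0 : X) 1, ∃ k ∈ K, 1 - α i / 2 < g i (b + k) := by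
    have hlt : 1 - α i / 2 < sSup (g i '' (closedBall 0 1 + K)) := by rw [hg i]; linarith [hα i]
    obtain ⟨_, ⟨_, ⟨b, hb, k, hk, rfl⟩, rfl⟩, hlt⟩ := exists_lt_of_lt_csSup (hne.image (g i)) hlt
    exact ⟨b, hb, k, hk, hlt⟩
  choose b hb k hk hbk using hdeep
  have hx0 : x ≠ 0 := norm_pos_iff.1 (by linarith)
  obtain ⟨w, hw, hxw⟩ := hD.exists_norm_sub_sum_gt (norm_smul_inv_norm (𝕜 := ℝ) hx0) hlam hlam1
    (fun i => ne_zero_of_sSup_image_eq_one hne (hg i))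
    (fun i => half_pos (hα i)) hη
  refine ⟨∑ i, lam i • (w i + k i), ⟨fun i => w i + k i, fun i => ⟨?_, ?_⟩, rfl⟩, ?_⟩
  · exact Set.add_mem_add (mem_closedBall_zero_iff.2 (hw i).1) (hk i)
  · exact lt_apply_add_of_lt (norm_le_one_of_sSup_image_eq_one hball (hg i)) (hα i).le
      (mem_closedBall_zero_iff.1 (hb i)) (hbk i) (hw i).2
  · have hkρ : ‖∑ i, lam i • k i‖ ≤ ρ :=
      mem_closedBall_zero_iff.1 (hKρ (hK.sum_mem (fun i _ => hlam i) hlam1 fun i _ => hk i))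
    have hxρ' : ‖x - ‖x‖⁻¹ • x‖ ≤ ρ := by
      rw [norm_sub_inv_norm_smul_self hx0, abs_of_nonneg (by linarith)]; linarith
    have hsplit : ‖x‖⁻¹ • x - ∑ i, lam i • w i
        = (x - ∑ i, lam i • (w i + k i)) - (x - ‖x‖⁻¹ • x) + ∑ i, lam i • k i := by
      simp only [smul_add, Finset.sum_add_distrib]; abel
    have := calc 2 - η < ‖‖x‖⁻¹ • x - ∑ i, lam i • w i‖ := hxw
      _ ≤ ‖x - ∑ i, lam i • (w i + k i)‖ + ‖x - ‖x‖⁻¹ • x‖ + ‖∑ i, lam i • k i‖ :=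
        hsplit ▸ norm_add_le_of_le (norm_sub_le _ _) le_rfl
    linarith

lemma convex_Bdelta (x₀ : X) (δ : ℝ) : Convex ℝ (Bdelta x₀ δ) :=
  (convex_convexHull ℝ _).closure

lemma zero_mem_Bdelta (x₀ : X) (δ : ℝ) : (0 : X) ∈ Bdelta x₀ δ :=
  subset_closure (subset_convexHull ℝ _ (Or.inl (mem_closedBall_self zero_le_one)))

lemma Bdelta_subset_closedBall {x₀ : X} (hx₀ : ‖x₀‖ ≤ 1) {δ : ℝ} (hδ : 0 ≤ δ) :
    Bdelta x₀ δ ⊆ closedBall 0 (1 + δ) := by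
  have hx₀δ : ‖(1 + δ) • x₀‖ ≤ 1 + δ := by
    rw [norm_smul, Real.norm_of_nonneg (by linarith)]
    exact mul_le_of_le_one_right (by linarith) hx₀
  refine closure_minimal (convexHull_min ?_ (convex_closedBall _ _)) isClosed_closedBall
  rintro u (hu | rfl | rfl)
  · exact closedBall_subset_closedBall (by linarith) hu
  · exact mem_closedBall_zero_iff.2 hx₀δ
  · exact mem_closedBall_zero_iff.2 (by rwa [norm_neg])

lemma smul_Bdelta_subset_closedBall {x₀ : X} (hx₀ : ‖x₀‖ ≤ 1) {δ ε : ℝ} (hδ : 0 ≤ δ)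
    (hε : 0 ≤ ε) : ε • Bdelta x₀ δ ⊆ closedBall 0 (ε * (1 + δ)) := by
  have := Set.smul_set_mono (a := ε) (Bdelta_subset_closedBall hx₀ hδ)
  rwa [smul_closedBall ε 0 (by linarith), smul_zero, Real.norm_of_nonneg hε] at this

end Lemmas

theorem renorming_thick_convex_combinations_general
    (X : Type*) [NormedAddCommGroup X] [NormedSpace ℝ X]
    (hD : ∀ x : X, ‖x‖ = 1 → ∀ (n : ℕ) (lam : Fin n → ℝ), (∀ i, 0 ≤ lam i) →
      (∑ i, lam i) = 1 → ∀ g : Fin n → StrongDual ℝ X, (∀ i, ‖g i‖ = 1) →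
      ∀ α : Fin n → ℝ, (∀ i, 0 < α i) → ∀ η : ℝ, 0 < η →
      ∃ y ∈ convexCombOfSlices (Metric.closedBall (0 : X) 1) lam g α, ‖x - y‖ > 2 - η)
    (x₀ : X) (hx₀ : ‖x₀‖ = 1)
    (δ ε : ℝ) (hδ : 0 < δ) (hε : 0 < ε) :
    ∀ x : X, gauge (Ceps x₀ δ ε) x = 1 →
    ∀ (n : ℕ) (lam : Fin n → ℝ), (∀ i, 0 ≤ lam i) → (∑ i, lam i) = 1 →
    ∀ g : Fin n → StrongDual ℝ X, (∀ i, sSup (g i '' Ceps x₀ δ ε) = 1) →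
    ∀ α : Fin n → ℝ, (∀ i, 0 < α i) → ∀ η : ℝ, 0 < η →
    ∃ y ∈ convexCombOfSlices (Ceps x₀ δ ε) lam g α,
      gauge (Ceps x₀ δ ε) (x - y) ≥ (2 - 3 * ε * (1 + δ) - η) / (1 + ε * (1 + δ)) := by
  intro x hx n lam hlam hlam1 g hg α hα η hη
  set ρ := ε * (1 + δ)
  have hρ : 0 ≤ ρ := by positivity
  have hK := smul_Bdelta_subset_closedBall hx₀.le hδ.le hε.le
  have hK0 : (0 : X) ∈ ε • Bdelta x₀ δ := ⟨0, zero_mem_Bdelta x₀ δ, smul_zero ε⟩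
  have hball : closedBall (0 : X) 1 ⊆ Ceps x₀ δ ε := Set.subset_add_left _ hK0
  have hCρ : Ceps x₀ δ ε ⊆ closedBall 0 (1 + ρ) := closedBall_zero_add_subset hK
  have hx1 : 1 ≤ ‖x‖ := hx ▸ gauge_le_norm hball x
  have hxρ : ‖x‖ ≤ 1 + ρ :=
    (div_le_one (by linarith)).1 (hx ▸ norm_div_le_gauge hball (by linarith) hCρ x)
  obtain ⟨y, hy, hxy⟩ := HasDaugavetProperty.exists_mem_convexCombOfSlices_closedBall_add hD
    ((convex_Bdelta x₀ δ).smul ε) hK0 hK hx1 hxρ hlam hlam1 hg hα hη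
  refine ⟨y, hy, le_trans ?_ (norm_div_le_gauge hball (by linarith) hCρ _)⟩
  gcongr
  linarith

/-- Let `X` have the Daugavet property (hypothesis `hD`, in the
convex-combinations-of-slices form) and construct `B_δ`, `C_ε` and `|·|_ε = gauge C_ε`
from `x₀ ∈ S_X`, `f ∈ S_{X*}` with `f(x₀) = 1` and `δ, ε > 0`. Then for every `x` with
`|x|_ε = 1`, every `η > 0` and every convex combination of slices `C` of the unit ball
`C_ε` of `(X, |·|_ε)` (the slicing functionals being norm-one for `|·|_ε^*`, i.e. with
supremum `1` on `C_ε`), there is `y ∈ C` with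
`|x - y|_ε ≥ (2 - 3ε(1+δ) - η)/(1 + ε(1+δ))`. -/
theorem renorming_thick_convex_combinations
    (X : Type*) [NormedAddCommGroup X] [NormedSpace ℝ X] [CompleteSpace X]
    (hD : ∀ x : X, ‖x‖ = 1 → ∀ (n : ℕ) (lam : Fin n → ℝ), (∀ i, 0 ≤ lam i) →
      (∑ i, lam i) = 1 → ∀ g : Fin n → StrongDual ℝ X, (∀ i, ‖g i‖ = 1) →
      ∀ α : Fin n → ℝ, (∀ i, 0 < α i) → ∀ η : ℝ, 0 < η →
      ∃ y ∈ convexCombOfSlices (Metric.closedBall (0 : X) 1) lam g α, ‖x - y‖ > 2 - η)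
    (x₀ : X) (hx₀ : ‖x₀‖ = 1) (f : StrongDual ℝ X) (hf : ‖f‖ = 1) (hfx₀ : f x₀ = 1)
    (δ ε : ℝ) (hδ : 0 < δ) (hε : 0 < ε) :
    ∀ x : X, gauge (Ceps x₀ δ ε) x = 1 →
    ∀ (n : ℕ) (lam : Fin n → ℝ), (∀ i, 0 ≤ lam i) → (∑ i, lam i) = 1 →
    ∀ g : Fin n → StrongDual ℝ X, (∀ i, sSup (g i '' Ceps x₀ δ ε) = 1) →
    ∀ α : Fin n → ℝ, (∀ i, 0 < α i) → ∀ η : ℝ, 0 < η →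
    ∃ y ∈ convexCombOfSlices (Ceps x₀ δ ε) lam g α,
      gauge (Ceps x₀ δ ε) (x - y) ≥ (2 - 3 * ε * (1 + δ) - η) / (1 + ε * (1 + δ)) :=
  renorming_thick_convex_combinations_general X hD x₀ hx₀ δ ε hδ hε
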